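/- In the Gaudin realization, the commutator [X⁻(λ), X⁻(μ)] = -ξ(μX⁻(λ) - λX⁻(μ)) holds, [X⁺(λ), X⁺(μ)] = 0, and [h(λ), X⁻(μ)] = 2(X⁻(λ)-X⁻(μ))/(λ-μ) + ξμ h(μ), and [h(λ), X⁺(μ)] = -2(X⁺(λ)-X⁺(μ))/(λ-μ), for distinct λ, μ outside the set of sites. -/
import Mathlib


noncomputable section

lemma myCommuteSmulL {A : Type*} [Ring A] [Algebra ℂ A] (r : ℂ) {x y : A}
    (h : Commute x y) : Commute (r • x) y := by
  unfold Commute SemiconjBy at *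
  rw [smul_mul_assoc, mul_smul_comm, h]

lemma myCommuteSmulR {A : Type*} [Ring A] [Algebra ℂ A] (r : ℂ) {x y : A}
    (h : Commute x y) : Commute x (r • y) := by
  unfold Commute SemiconjBy at *
  rw [smul_mul_assoc, mul_smul_comm, h]

lemma myCommSum {A : Type*} [Ring A] {N : ℕ} (f g : Fin N → A)
    (hfg : ∀ a b, a ≠ b → Commute (f a) (g b)) :
    (∑ a, f a) * (∑ a, g a) - (∑ a, g a) * (∑ a, f a)
      = ∑ a, (f a * g a - g a * f a) := by
  rw [Finset.sum_mul_sum, Finset.sum_mul_sum]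
  rw [Finset.sum_comm (f := fun i j => g i * f j)]
  rw [← Finset.sum_sub_distrib]
  refine Finset.sum_congr rfl fun a _ => ?_
  rw [← Finset.sum_sub_distrib]
  exact Finset.sum_eq_single a
    (fun b _ hba => sub_eq_zero.mpr ((hfg a b (fun h => hba h.symm)).eq))
    (fun h => absurd (Finset.mem_univ a) h)


/-- The current `h(λ) = Σ_a (h_a/(λ-z_a) + ξ z_a X⁺_a)`. -/
def hCur {A : Type*} [Ring A] [Algebra ℂ A] {N : ℕ} (z : Fin N → ℂ) (ξ : ℂ)
    (H Xp : Fin N → A) (l : ℂ) : A :=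
  ∑ a, ((l - z a)⁻¹ • H a + (ξ * z a) • Xp a)

/-- The current `X⁻(λ) = Σ_a (X⁻_a/(λ-z_a) - (ξ/2)λ h_a)`. -/
def XmCur {A : Type*} [Ring A] [Algebra ℂ A] {N : ℕ} (z : Fin N → ℂ) (ξ : ℂ)
    (H Xm : Fin N → A) (l : ℂ) : A :=
  ∑ a, ((l - z a)⁻¹ • Xm a - (ξ / 2 * l) • H a)

/-- The current `X⁺(λ) = Σ_a X⁺_a/(λ-z_a)`. -/
def XpCur {A : Type*} [Ring A] [Algebra ℂ A] {N : ℕ} (z : Fin N → ℂ)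
    (Xp : Fin N → A) (l : ℂ) : A :=
  ∑ a, (l - z a)⁻¹ • Xp a

/-- The λ-derivative `h'(λ) = -Σ_a h_a/(λ-z_a)²` of the current `h(λ)`. -/
def hdCur {A : Type*} [Ring A] [Algebra ℂ A] {N : ℕ} (z : Fin N → ℂ)
    (H : Fin N → A) (l : ℂ) : A :=
  ∑ a, (-((l - z a) ^ 2)⁻¹) • H a

/-- The generating function `t(λ) = h(λ)² - 2h'(λ) + 2(2X⁻(λ) + ξλ)X⁺(λ)`. -/
def tCur {A : Type*} [Ring A] [Algebra ℂ A] {N : ℕ} (z : Fin N → ℂ) (ξ : ℂ)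
    (H Xp Xm : Fin N → A) (l : ℂ) : A :=
  hCur z ξ H Xp l * hCur z ξ H Xp l - (2 : ℂ) • hdCur z H l +
    ((2 : ℂ) • ((2 : ℂ) • XmCur z ξ H Xm l + (ξ * l) • (1 : A))) * XpCur z Xp l

/-- The sl₂ relations at every site, and commutativity of generators at distinct sites. -/
def GaudinSites {A : Type*} [Ring A] [Algebra ℂ A] {N : ℕ}
    (H Xp Xm : Fin N → A) : Prop :=
  (∀ a, H a * Xp a - Xp a * H a = (2 : ℂ) • Xp a) ∧
  (∀ a, Xp a * Xm a - Xm a * Xp a = H a) ∧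
  (∀ a, H a * Xm a - Xm a * H a = (-2 : ℂ) • Xm a) ∧
  (∀ a b, a ≠ b → ∀ x ∈ ({H a, Xp a, Xm a} : Set A), ∀ y ∈ ({H b, Xp b, Xm b} : Set A),
    Commute x y)

set_option maxHeartbeats 2000000 in
/-- `[X⁻(λ),X⁻(μ)] = -ξ(μX⁻(λ) - λX⁻(μ))`, `[X⁺(λ),X⁺(μ)] = 0`,
`[h(λ),X⁻(μ)] = 2(X⁻(λ)-X⁻(μ))/(λ-μ) + ξμh(μ)` and
`[h(λ),X⁺(μ)] = -2(X⁺(λ)-X⁺(μ))/(λ-μ)`. -/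
theorem current_comm_relations {A : Type*} [Ring A] [Algebra ℂ A] {N : ℕ} (z : Fin N → ℂ)
    (ξ : ℂ) (H Xp Xm : Fin N → A) (hz : Function.Injective z) (hG : GaudinSites H Xp Xm)
    (l m : ℂ) (hl : l ∉ Set.range z) (hm : m ∉ Set.range z) (hlm : l ≠ m) :
    (XmCur z ξ H Xm l * XmCur z ξ H Xm m - XmCur z ξ H Xm m * XmCur z ξ H Xm l =
      -(ξ • (m • XmCur z ξ H Xm l - l • XmCur z ξ H Xm m))) ∧
    (XpCur z Xp l * XpCur z Xp m - XpCur z Xp m * XpCur z Xp l = 0) ∧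
    (hCur z ξ H Xp l * XmCur z ξ H Xm m - XmCur z ξ H Xm m * hCur z ξ H Xp l =
      (2 * (l - m)⁻¹) • (XmCur z ξ H Xm l - XmCur z ξ H Xm m) + (ξ * m) • hCur z ξ H Xp m) ∧
    (hCur z ξ H Xp l * XpCur z Xp m - XpCur z Xp m * hCur z ξ H Xp l =
      (-2 * (l - m)⁻¹) • (XpCur z Xp l - XpCur z Xp m)) := by
  obtain ⟨rHP, rPM, rHM, hcomm⟩ := hG
  have hA : ∀ a, l - z a ≠ 0 := fun a => sub_ne_zero.mpr (fun h => hl ⟨a, h.symm⟩)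
  have hB : ∀ a, m - z a ≠ 0 := fun a => sub_ne_zero.mpr (fun h => hm ⟨a, h.symm⟩)
  have hlm' : l - m ≠ 0 := sub_ne_zero.mpr hlm
  -- pairwise commuting generators at distinct sites
  have cHH : ∀ a b, a ≠ b → Commute (H a) (H b) :=
    fun a b h => hcomm a b h _ (by simp) _ (by simp)
  have cHP : ∀ a b, a ≠ b → Commute (H a) (Xp b) :=
    fun a b h => hcomm a b h _ (by simp) _ (by simp)
  have cHM : ∀ a b, a ≠ b → Commute (H a) (Xm b) :=
    fun a b h => hcomm a b h _ (by simp) _ (by simp)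
  have cPH : ∀ a b, a ≠ b → Commute (Xp a) (H b) :=
    fun a b h => hcomm a b h _ (by simp) _ (by simp)
  have cPP : ∀ a b, a ≠ b → Commute (Xp a) (Xp b) :=
    fun a b h => hcomm a b h _ (by simp) _ (by simp)
  have cPM : ∀ a b, a ≠ b → Commute (Xp a) (Xm b) :=
    fun a b h => hcomm a b h _ (by simp) _ (by simp)
  have cMH : ∀ a b, a ≠ b → Commute (Xm a) (H b) :=
    fun a b h => hcomm a b h _ (by simp) _ (by simp)
  have cMM : ∀ a b, a ≠ b → Commute (Xm a) (Xm b) :=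
    fun a b h => hcomm a b h _ (by simp) _ (by simp)
  -- reordering forms of the sl2 relations
  have hp : ∀ a, H a * Xp a = (2 : ℂ) • Xp a + Xp a * H a :=
    fun a => sub_eq_iff_eq_add.mp (rHP a)
  have px : ∀ a, Xp a * Xm a = H a + Xm a * Xp a :=
    fun a => sub_eq_iff_eq_add.mp (rPM a)
  have hx : ∀ a, H a * Xm a = (-2 : ℂ) • Xm a + Xm a * H a :=
    fun a => sub_eq_iff_eq_add.mp (rHM a)
  refine ⟨?_, ?_, ?_, ?_⟩
  · -- [X⁻(l), X⁻(m)]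
    rw [XmCur, XmCur,
      myCommSum _ _ (fun a b hab =>
        ((myCommuteSmulR _ (myCommuteSmulL _ (cMM a b hab))).sub_right
          (myCommuteSmulR _ (myCommuteSmulL _ (cMH a b hab)))).sub_left
        ((myCommuteSmulR _ (myCommuteSmulL _ (cHM a b hab))).sub_right
          (myCommuteSmulR _ (myCommuteSmulL _ (cHH a b hab)))))]
    rw [Finset.smul_sum, Finset.smul_sum, ← Finset.sum_sub_distrib, Finset.smul_sum,
      ← Finset.sum_neg_distrib]
    refine Finset.sum_congr rfl fun a _ => ?_
    simp only [sub_mul, mul_sub, add_mul, mul_add, smul_mul_assoc, mul_smul_comm, smul_smul,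
      hx, hp, px, smul_add, smul_sub]
    have ha := hA a
    have hb := hB a
    match_scalars <;> field_simp <;> ring
  · -- [X⁺(l), X⁺(m)]
    rw [XpCur, XpCur,
      myCommSum _ _ (fun a b hab =>
        myCommuteSmulR _ (myCommuteSmulL _ (cPP a b hab)))]
    refine Finset.sum_eq_zero fun a _ => ?_
    simp only [smul_mul_assoc, mul_smul_comm, smul_smul]
    match_scalars <;> ring
  · -- [h(l), X⁻(m)]
    rw [hCur, XmCur, XmCur, hCur,
      myCommSum _ _ (fun a b hab =>
        ((myCommuteSmulR _ (myCommuteSmulL _ (cHM a b hab))).sub_right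
          (myCommuteSmulR _ (myCommuteSmulL _ (cHH a b hab)))).add_left
        ((myCommuteSmulR _ (myCommuteSmulL _ (cPM a b hab))).sub_right
          (myCommuteSmulR _ (myCommuteSmulL _ (cPH a b hab)))))]
    rw [← Finset.sum_sub_distrib, Finset.smul_sum, Finset.smul_sum, ← Finset.sum_add_distrib]
    refine Finset.sum_congr rfl fun a _ => ?_
    simp only [sub_mul, mul_sub, add_mul, mul_add, smul_mul_assoc, mul_smul_comm, smul_smul,
      hx, hp, px, smul_add, smul_sub]
    have ha := hA a
    have hb := hB a
    match_scalars <;> field_simp <;> ring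
  · -- [h(l), X⁺(m)]
    rw [hCur, XpCur, XpCur,
      myCommSum _ _ (fun a b hab =>
        (myCommuteSmulR _ (myCommuteSmulL _ (cHP a b hab))).add_left
        (myCommuteSmulR _ (myCommuteSmulL _ (cPP a b hab))))]
    rw [← Finset.sum_sub_distrib, Finset.smul_sum]
    refine Finset.sum_congr rfl fun a _ => ?_
    simp only [add_mul, mul_add, smul_mul_assoc, mul_smul_comm, smul_smul,
      hx, hp, px, smul_add, smul_sub]
    have ha := hA a
    have hb := hB a
    match_scalars <;> field_simp <;> ring


end
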